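/- Let A, B ⊆ F_{p^m}^n be linear codes both having trivial hull with respect to the Hermitian inner product ⟨x,y⟩_θ = Σᵢ xᵢθ(yᵢ), where θ is a field automorphism. Then B = A·X for a permutation matrix X if and only if Σ^θ_B = Xᵀ·Σ^θ_A·X, where Σ^θ_U := θ(G_Uᵀ)(G_U·θ(G_Uᵀ))⁻¹G_U for a generator matrix G_U of U. -/

import Mathlib

/-!
Acting on row vectors from the right, `Σ^θ_G = θ(Gᵀ) (G θ(Gᵀ))⁻¹ G` is the projection onto the
row space of `G` along the vectors `θ`-orthogonal to it. Once the Gram matrix `G θ(Gᵀ)` is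
invertible, which is what a trivial `θ`-hull provides, this projection recovers the row space as
its image and depends on nothing but the row space, so two such generator matrices span the same
code iff their projections agree. A permutation matrix satisfies `X θ(Xᵀ) = 1`; hence `G_A X`
generates `A X`, has the same Gram matrix as `G_A`, and `Σ^θ_{G_A X} = Xᵀ Σ^θ_A X`. Both sides of
the equivalence therefore compare `G_B` with `G_A X`.
-/

open Matrix

/-- The Hermitian dual of a linear code `U ⊆ F_{p^m}^n` with respect to the Hermitian inner
product `⟨x, y⟩_θ = ∑ i, x i * θ (y i)` attached to a field automorphism `θ`. -/
def hermDualCode {p m n : ℕ} [Fact p.Prime]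
    (θ : GaloisField p m ≃+* GaloisField p m)
    (U : Submodule (GaloisField p m) (Fin n → GaloisField p m)) :
    Submodule (GaloisField p m) (Fin n → GaloisField p m) where
  carrier := {z | ∀ u ∈ U, ∑ i, u i * θ (z i) = 0}
  add_mem' := by
    intro a b ha hb u hu
    have h1 := ha u hu
    have h2 := hb u hu
    simp only [Set.mem_setOf_eq] at *
    calc ∑ i, u i * θ ((a + b) i)
        = (∑ i, u i * θ (a i)) + ∑ i, u i * θ (b i) := by
          rw [← Finset.sum_add_distrib]
          exact Finset.sum_congr rfl fun i _ => by simp [map_add, mul_add]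
      _ = 0 := by rw [h1, h2, add_zero]
  zero_mem' := by
    intro u hu
    simp
  smul_mem' := by
    intro c a ha u hu
    have h := ha u hu
    simp only [Set.mem_setOf_eq] at *
    calc ∑ i, u i * θ ((c • a) i) = θ c * ∑ i, u i * θ (a i) := by
          rw [Finset.mul_sum]
          exact Finset.sum_congr rfl fun i _ => by
            simp [smul_eq_mul, _root_.map_mul]; ring
      _ = 0 := by rw [h, mul_zero]

section HermitianProjection

variable {R ι κ κ' : Type*} [CommRing R] (θ : R →+* R)

def hermGram [Fintype ι] (G : Matrix κ ι R) : Matrix κ κ R := G * Gᵀ.map θ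

noncomputable def hermProj [Fintype ι] [Fintype κ] [DecidableEq κ] (G : Matrix κ ι R) :
    Matrix ι ι R :=
  Gᵀ.map θ * (hermGram θ G)⁻¹ * G

variable {θ}

theorem transpose_map_mul [Fintype κ] (C : Matrix κ' κ R) (G : Matrix κ ι R) :
    (C * G)ᵀ.map θ = Gᵀ.map θ * Cᵀ.map θ := by
  rw [transpose_mul, Matrix.map_mul]

section Projection

variable [Fintype ι] [Fintype κ] [DecidableEq κ] [Fintype κ'] [DecidableEq κ']

theorem mul_hermProj {G : Matrix κ ι R} (hG : IsUnit (hermGram θ G).det) :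
    G * hermProj θ G = G := by
  rw [hermProj, ← Matrix.mul_assoc, ← Matrix.mul_assoc, ← hermGram, mul_nonsing_inv _ hG,
    Matrix.one_mul]

theorem hermProj_mul_transpose_map {G : Matrix κ ι R} (hG : IsUnit (hermGram θ G).det) :
    hermProj θ G * Gᵀ.map θ = Gᵀ.map θ := by
  rw [hermProj, Matrix.mul_assoc, ← hermGram, nonsing_inv_mul_cancel_right _ _ hG]

theorem hermProj_eq_of_eq_mul {G : Matrix κ ι R} {H : Matrix κ' ι R}
    (hG : IsUnit (hermGram θ G).det) (hH : IsUnit (hermGram θ H).det)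
    {C : Matrix κ' κ R} {D : Matrix κ κ' R} (hHG : H = C * G) (hGH : G = D * H) :
    hermProj θ G = hermProj θ H := by
  have hG_mul : G * hermProj θ H = G := by
    rw [hGH, Matrix.mul_assoc, mul_hermProj hH]
  have hH_map : hermProj θ G * Hᵀ.map θ = Hᵀ.map θ := by
    rw [hHG, transpose_map_mul, ← Matrix.mul_assoc, hermProj_mul_transpose_map hG]
  calc hermProj θ G = hermProj θ G * hermProj θ H := by
        rw [hermProj.eq_1 θ G, Matrix.mul_assoc _ G, hG_mul]
    _ = hermProj θ H := by
        rw [hermProj.eq_1 θ H, ← Matrix.mul_assoc, ← Matrix.mul_assoc, hH_map]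

end Projection

theorem span_range_eq_range_vecMulLinear [Fintype κ] (G : Matrix κ ι R) :
    Submodule.span R (Set.range G) = LinearMap.range G.vecMulLinear :=
  (range_vecMulLinear G).symm

theorem range_vecMulLinear_mul_le [Fintype κ] [Fintype κ'] (A : Matrix κ' κ R)
    (B : Matrix κ ι R) :
    LinearMap.range (A * B).vecMulLinear ≤ LinearMap.range B.vecMulLinear := by
  rintro _ ⟨v, rfl⟩
  exact ⟨v ᵥ* A, vecMul_vecMul v A B⟩

theorem exists_eq_mul_of_range_vecMulLinear_le [Fintype κ] [Fintype κ'] [DecidableEq κ']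
    {G : Matrix κ ι R} {H : Matrix κ' ι R}
    (h : LinearMap.range H.vecMulLinear ≤ LinearMap.range G.vecMulLinear) :
    ∃ C : Matrix κ' κ R, H = C * G := by
  have hrow (i : κ') : ∃ c, c ᵥ* G = H i :=
    h ⟨Pi.single i 1, single_one_vecMul i H⟩
  choose c hc using hrow
  exact ⟨of c, by ext i j; rw [← hc i]; rfl⟩

theorem range_vecMulLinear_hermProj [Fintype ι] [Fintype κ] [DecidableEq κ]
    {G : Matrix κ ι R} (hG : IsUnit (hermGram θ G).det) :
    LinearMap.range (hermProj θ G).vecMulLinear = LinearMap.range G.vecMulLinear := by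
  refine le_antisymm (range_vecMulLinear_mul_le _ G) ?_
  conv_lhs => rw [← mul_hermProj hG]
  exact range_vecMulLinear_mul_le G _

theorem span_range_eq_iff_hermProj_eq [Fintype ι] [Fintype κ] [DecidableEq κ] [Fintype κ']
    [DecidableEq κ'] {G : Matrix κ ι R} {H : Matrix κ' ι R}
    (hG : IsUnit (hermGram θ G).det) (hH : IsUnit (hermGram θ H).det) :
    Submodule.span R (Set.range G) = Submodule.span R (Set.range H) ↔
      hermProj θ G = hermProj θ H := by
  simp only [span_range_eq_range_vecMulLinear]
  refine ⟨fun h => ?_, fun h => ?_⟩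
  · obtain ⟨C, hC⟩ := exists_eq_mul_of_range_vecMulLinear_le h.ge
    obtain ⟨D, hD⟩ := exists_eq_mul_of_range_vecMulLinear_le h.le
    exact hermProj_eq_of_eq_mul hG hH hC hD
  · rw [← range_vecMulLinear_hermProj hG, h, range_vecMulLinear_hermProj hH]

theorem span_range_mul [Fintype ι] [Fintype κ] (G : Matrix κ ι R) (P : Matrix ι ι R) :
    Submodule.span R (Set.range (G * P)) =
      (Submodule.span R (Set.range G)).map P.vecMulLinear := by
  simp only [span_range_eq_range_vecMulLinear, ← LinearMap.range_comp]
  congr 1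
  exact LinearMap.ext fun v => (vecMul_vecMul v G P).symm

section Unitary

variable [Fintype ι] [DecidableEq ι] {P : Matrix ι ι R}

theorem hermGram_mul_of_mul_transpose_map_eq_one (hP : P * Pᵀ.map θ = 1) (G : Matrix κ ι R) :
    hermGram θ (G * P) = hermGram θ G := by
  rw [hermGram, transpose_map_mul, Matrix.mul_assoc, ← Matrix.mul_assoc P, hP, Matrix.one_mul,
    hermGram]

theorem hermProj_mul_of_mul_transpose_map_eq_one [Fintype κ] [DecidableEq κ]
    (hP : P * Pᵀ.map θ = 1) (G : Matrix κ ι R) :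
    hermProj θ (G * P) = Pᵀ.map θ * hermProj θ G * P := by
  rw [hermProj, hermGram_mul_of_mul_transpose_map_eq_one hP, transpose_map_mul, hermProj]
  simp only [Matrix.mul_assoc]

end Unitary

end HermitianProjection

theorem Equiv.Perm.permMatrix_transpose_map {R ι : Type*} [DecidableEq ι]
    [NonAssocSemiring R] (θ : R →+* R) (σ : Equiv.Perm ι) :
    (σ.permMatrix R)ᵀ.map θ = (σ.permMatrix R)ᵀ := by
  rw [transpose_map, PEquiv.map_toMatrix]

theorem Equiv.Perm.permMatrix_mul_transpose {R ι : Type*} [Fintype ι] [DecidableEq ι]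
    [NonAssocSemiring R] (σ : Equiv.Perm ι) :
    σ.permMatrix R * (σ.permMatrix R)ᵀ = 1 := by
  rw [transpose_permMatrix, ← permMatrix_mul, inv_mul_cancel, permMatrix_one]

theorem isUnit_det_hermGram_of_hull {p m n k : ℕ} [Fact p.Prime]
    (θ : GaloisField p m ≃+* GaloisField p m) {G : Matrix (Fin k) (Fin n) (GaloisField p m)}
    (hG : LinearIndependent (GaloisField p m) G)
    (hhull : Submodule.span (GaloisField p m) (Set.range G) ⊓
      hermDualCode θ (Submodule.span (GaloisField p m) (Set.range G)) = ⊥) :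
    IsUnit (hermGram (θ : GaloisField p m →+* GaloisField p m) G).det := by
  refine isUnit_iff_ne_zero.mpr fun hdet => ?_
  obtain ⟨v, hv0, hv⟩ := exists_mulVec_eq_zero_iff.mpr hdet
  set c := θ.symm ∘ v
  -- the codeword `c G` is θ-orthogonal to the code because `θ(c G) = θ(Gᵀ) v` and `G θ(Gᵀ) v = 0`
  have hθc : θ ∘ (c ᵥ* G) = Gᵀ.map θ *ᵥ v := by
    ext j
    rw [Function.comp_apply, ← RingEquiv.coe_toRingHom, RingHom.map_vecMul,
      ← vecMul_transpose, transpose_map, transpose_transpose]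
    congr 1
    ext i
    simp [c]
  have hdual : c ᵥ* G ∈ hermDualCode θ (Submodule.span (GaloisField p m) (Set.range G)) := by
    intro a ha
    rw [span_range_eq_range_vecMulLinear] at ha
    obtain ⟨d, rfl⟩ := ha
    change (d ᵥ* G) ⬝ᵥ (θ ∘ (c ᵥ* G)) = 0
    rw [hθc, ← dotProduct_mulVec, mulVec_mulVec]
    exact (congrArg (d ⬝ᵥ ·) hv).trans (dotProduct_zero d)
  have hmem : c ᵥ* G ∈ Submodule.span (GaloisField p m) (Set.range G) := by
    rw [span_range_eq_range_vecMulLinear]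
    exact ⟨c, rfl⟩
  have hc : c = 0 := by
    have h0 : c ᵥ* G = 0 := by
      simpa [hhull] using Submodule.mem_inf.mpr ⟨hmem, hdual⟩
    exact vecMul_injective_iff.mpr hG (h0.trans (zero_vecMul G).symm)
  exact hv0 (funext fun j => by simpa [c] using congrFun hc j)

theorem statement14_general {p m n k : ℕ} [Fact p.Prime]
    (θ : GaloisField p m ≃+* GaloisField p m)
    (A B : Submodule (GaloisField p m) (Fin n → GaloisField p m))
    (GA GB : Matrix (Fin k) (Fin n) (GaloisField p m))
    (hAind : LinearIndependent (GaloisField p m) GA)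
    (hAspan : Submodule.span (GaloisField p m) (Set.range GA) = A)
    (hBind : LinearIndependent (GaloisField p m) GB)
    (hBspan : Submodule.span (GaloisField p m) (Set.range GB) = B)
    (hAhull : A ⊓ hermDualCode θ A = ⊥)
    (hBhull : B ⊓ hermDualCode θ B = ⊥)
    (σ : Equiv.Perm (Fin n)) :
    B = Submodule.map (Matrix.vecMulLinear (σ.permMatrix (GaloisField p m))) A ↔
      (GBᵀ.map θ) * (GB * GBᵀ.map θ)⁻¹ * GB =
        (σ.permMatrix (GaloisField p m))ᵀ * ((GAᵀ.map θ) * (GA * GAᵀ.map θ)⁻¹ * GA) *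
          σ.permMatrix (GaloisField p m) := by
  subst hAspan hBspan
  set θ' : GaloisField p m →+* GaloisField p m := ↑θ
  set X := σ.permMatrix (GaloisField p m)
  have hX : X * Xᵀ.map θ' = 1 := by
    rw [σ.permMatrix_transpose_map, σ.permMatrix_mul_transpose]
  have hA : IsUnit (hermGram θ' GA).det := isUnit_det_hermGram_of_hull θ hAind hAhull
  have hB : IsUnit (hermGram θ' GB).det := isUnit_det_hermGram_of_hull θ hBind hBhull
  have hAX : IsUnit (hermGram θ' (GA * X)).det := by
    rwa [hermGram_mul_of_mul_transpose_map_eq_one hX]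
  change _ ↔ hermProj θ' GB = Xᵀ * hermProj θ' GA * X
  rw [← span_range_mul, span_range_eq_iff_hermProj_eq hB hAX,
    hermProj_mul_of_mul_transpose_map_eq_one hX, σ.permMatrix_transpose_map]

/-- Let `A, B ⊆ F_{p^m}^n` be linear codes with trivial hull with respect
to the Hermitian inner product `⟨x, y⟩_θ = ∑ i, x i * θ (y i)`, `θ` a field automorphism.
Then `B = A·X` for a permutation matrix `X` if and only if `Σ^θ_B = Xᵀ Σ^θ_A X`, where
`Σ^θ_U := θ(G_Uᵀ) (G_U θ(G_Uᵀ))⁻¹ G_U` for a generator matrix `G_U` of `U`. -/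
theorem statement14 {p m n k : ℕ} [Fact p.Prime] (hm : 1 ≤ m)
    (θ : GaloisField p m ≃+* GaloisField p m)
    (A B : Submodule (GaloisField p m) (Fin n → GaloisField p m))
    (GA GB : Matrix (Fin k) (Fin n) (GaloisField p m))
    (hAind : LinearIndependent (GaloisField p m) GA)
    (hAspan : Submodule.span (GaloisField p m) (Set.range GA) = A)
    (hBind : LinearIndependent (GaloisField p m) GB)
    (hBspan : Submodule.span (GaloisField p m) (Set.range GB) = B)
    (hAhull : A ⊓ hermDualCode θ A = ⊥)
    (hBhull : B ⊓ hermDualCode θ B = ⊥)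
    (σ : Equiv.Perm (Fin n)) :
    B = Submodule.map (Matrix.vecMulLinear (σ.permMatrix (GaloisField p m))) A ↔
      (GBᵀ.map θ) * (GB * GBᵀ.map θ)⁻¹ * GB =
        (σ.permMatrix (GaloisField p m))ᵀ * ((GAᵀ.map θ) * (GA * GAᵀ.map θ)⁻¹ * GA) *
          σ.permMatrix (GaloisField p m) :=
  statement14_general θ A B GA GB hAind hAspan hBind hBspan hAhull hBhull σ
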